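/- arXiv:1101.1539 — 3 statements merged into one kernel-verified Lean document; each statement's English description precedes it below -/
import Mathlib

section
/- Every finite convex geometry (A, cl) has a strong atomistic extension: there exists a convex geometry (A, τ) on the same finite set A such that τ({a}) = {a} for every a ∈ A (τ is atomistic), every cl-closed set is τ-closed, and cl(X ∪ Y) = τ(X ∪ Y) for all cl-closed X, Y ⊆ A. In particular, every finite convex geometry is a sub-geometry of a finite atomistic convex geometry. -/
/-- A convex geometry: a closure operator on subsets of `A` (extensive, monotone,
idempotent, valued in subsets of `A`) which is zero-closed and satisfies the
anti-exchange axiom. -/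
def IsConvexGeometry {α : Type*} (A : Set α) (cl : Set α → Set α) : Prop :=
  (∀ Y : Set α, Y ⊆ A → Y ⊆ cl Y) ∧
  (∀ Y : Set α, Y ⊆ A → cl Y ⊆ A) ∧
  (∀ Y Z : Set α, Y ⊆ Z → Z ⊆ A → cl Y ⊆ cl Z) ∧
  (∀ Y : Set α, Y ⊆ A → cl (cl Y) = cl Y) ∧
  cl ∅ = ∅ ∧
  (∀ x ∈ A, ∀ y ∈ A, x ≠ y → ∀ X : Set α, X ⊆ A → cl X = X →
    x ∈ cl (X ∪ {y}) → x ∉ X → y ∉ cl (X ∪ {x}))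

/-!
Call `D ⊆ A` join-closed if it contains `cl (X ∪ Y)` whenever it contains the `cl`-closed sets
`X` and `Y`, and chainable if it is reached from `A` by deleting one point at a time through
join-closed sets. Chainable sets are closed under intersection and every proper chainable set
grows by one point to a chainable one, so they are the closed sets of a convex geometry `τ`: for
anti-exchange, grow a `τ`-closed `X` point by point; the first step meeting `{x, y}` gives a
`τ`-closed set containing `X` and exactly one of `x, y`.

Descending along covers of closed sets shows that every `cl`-closed set is chainable, and so is
every singleton `{a}`: descend from `cl {a}` to `{a}`, using that `cl {a} \ {a}` is closed.
Finally `τ (X ∪ Y)` is join-closed, so it contains `cl (X ∪ Y)`.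
-/

theorem Set.ncard_sdiff_insert_lt {α : Type*} {s t : Set α} {a : α} (hs : s.Finite) (ha : a ∈ s)
    (hat : a ∉ t) : (s \ insert a t).ncard < (s \ t).ncard :=
  Set.ncard_lt_ncard ⟨Set.sdiff_subset_sdiff_right (Set.subset_insert a t),
    fun h => (h ⟨ha, hat⟩).2 (Set.mem_insert a t)⟩ hs.sdiff

namespace IsConvexGeometry

variable {α : Type*} {A : Set α} {cl : Set α → Set α}

theorem subset_cl (hcl : IsConvexGeometry A cl) {Y : Set α} (hY : Y ⊆ A) : Y ⊆ cl Y :=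
  hcl.1 Y hY

theorem cl_subset (hcl : IsConvexGeometry A cl) {Y : Set α} (hY : Y ⊆ A) : cl Y ⊆ A :=
  hcl.2.1 Y hY

theorem cl_mono (hcl : IsConvexGeometry A cl) {Y Z : Set α} (hYZ : Y ⊆ Z) (hZ : Z ⊆ A) :
    cl Y ⊆ cl Z :=
  hcl.2.2.1 Y Z hYZ hZ

theorem cl_cl (hcl : IsConvexGeometry A cl) {Y : Set α} (hY : Y ⊆ A) : cl (cl Y) = cl Y :=
  hcl.2.2.2.1 Y hY

theorem cl_empty (hcl : IsConvexGeometry A cl) : cl ∅ = ∅ :=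
  hcl.2.2.2.2.1

theorem anti_exchange (hcl : IsConvexGeometry A cl) {x y : α} (hx : x ∈ A) (hy : y ∈ A)
    (hxy : x ≠ y) {X : Set α} (hXA : X ⊆ A) (hX : cl X = X) (hxXy : x ∈ cl (insert y X))
    (hxX : x ∉ X) : y ∉ cl (insert x X) := by
  have := hcl.2.2.2.2.2 x hx y hy hxy X hXA hX
  rw [Set.union_singleton, Set.union_singleton] at this
  exact this hxXy hxX

theorem cl_univ (hcl : IsConvexGeometry A cl) : cl A = A :=
  (hcl.cl_subset subset_rfl).antisymm (hcl.subset_cl subset_rfl)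

theorem cl_subset_of_subset (hcl : IsConvexGeometry A cl) {Y C : Set α} (hYC : Y ⊆ C)
    (hCA : C ⊆ A) (hC : cl C = C) : cl Y ⊆ C :=
  hC ▸ hcl.cl_mono hYC hCA

/-- `hcov` says that `N ⋖ M` in the lattice of closed sets. -/
theorem exists_eq_insert_of_covBy (hcl : IsConvexGeometry A cl) {N M : Set α} (hMA : M ⊆ A)
    (hN : cl N = N) (hM : cl M = M) (hNM : N ⊂ M)
    (hcov : ∀ K, cl K = K → N ⊆ K → K ⊆ M → K = N ∨ K = M) :
    ∃ p ∉ N, M = insert p N := by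
  have hgen : ∀ u ∈ M \ N, cl (insert u N) = M := by
    rintro u ⟨huM, huN⟩
    have hins : insert u N ⊆ M := Set.insert_subset huM hNM.subset
    have hext := hcl.subset_cl (hins.trans hMA)
    refine (hcov _ (hcl.cl_cl (hins.trans hMA)) ((Set.subset_insert u N).trans hext)
      (hcl.cl_subset_of_subset hins hMA hM)).resolve_left fun h => huN ?_
    exact h ▸ hext (Set.mem_insert u N)
  have hsingle : (M \ N).Subsingleton := by
    intro u hu v hv
    by_contra huv
    refine hcl.anti_exchange (hMA hu.1) (hMA hv.1) huv (hNM.subset.trans hMA) hN ?_ hu.2 ?_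
    · rw [hgen v hv]; exact hu.1
    · rw [hgen u hu]; exact hv.1
  obtain ⟨p, hp⟩ := Set.nonempty_of_ssubset hNM
  refine ⟨p, hp.2, ?_⟩
  rw [Set.insert_eq, Set.union_comm, ← hsingle.eq_singleton_of_mem hp,
    Set.union_sdiff_cancel hNM.subset]

theorem exists_insert_closed (hA : A.Finite) (hcl : IsConvexGeometry A cl) {C T : Set α}
    (hTA : T ⊆ A) (hC : cl C = C) (hT : cl T = T) (hCT : C ⊂ T) :
    ∃ p ∈ T, p ∉ C ∧ cl (insert p C) = insert p C ∧ insert p C ⊆ T := by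
  let 𝒮 : Set (Set α) := {S | cl S = S ∧ C ⊂ S ∧ S ⊆ T}
  have h𝒮 : 𝒮.Finite := hA.finite_subsets.subset fun S hS => hS.2.2.trans hTA
  obtain ⟨M, hM⟩ := h𝒮.exists_minimal ⟨T, hT, hCT, subset_rfl⟩
  obtain ⟨hMc, hCM, hMT⟩ := hM.prop
  obtain ⟨p, hpC, rfl⟩ := hcl.exists_eq_insert_of_covBy (hMT.trans hTA) hC hMc hCM
    fun K hK hCK hKM => (eq_or_ne K C).imp_right fun hKC =>
      hM.eq_of_le ⟨hK, hCK.ssubset_of_ne hKC.symm, hKM.trans hMT⟩ hKM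
  exact ⟨p, hMT (Set.mem_insert p C), hpC, hMc, hMT⟩

theorem exists_sdiff_singleton_closed (hA : A.Finite) (hcl : IsConvexGeometry A cl) {C : Set α}
    (hCA : C ⊆ A) (hC : cl C = C) (hne : C.Nonempty) :
    ∃ e ∈ C, cl (C \ {e}) = C \ {e} := by
  let 𝒮 : Set (Set α) := {S | cl S = S ∧ S ⊂ C}
  have h𝒮 : 𝒮.Finite := hA.finite_subsets.subset fun S hS => hS.2.subset.trans hCA
  obtain ⟨N, hN⟩ := h𝒮.exists_maximal ⟨∅, hcl.cl_empty, Set.empty_ssubset.mpr hne⟩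
  obtain ⟨hNc, hNC⟩ := hN.prop
  have hcov : ∀ K, cl K = K → N ⊆ K → K ⊆ C → K = N ∨ K = C := fun K hK hNK hKC =>
    (eq_or_ne K C).symm.imp_left fun hKC' => (hN.eq_of_le ⟨hK, hKC.ssubset_of_ne hKC'⟩ hNK).symm
  obtain ⟨e, heN, rfl⟩ := hcl.exists_eq_insert_of_covBy hCA hNc hC hNC hcov
  exact ⟨e, Set.mem_insert e N, by rwa [Set.insert_sdiff_self_of_notMem heN]⟩

theorem cl_cl_singleton_sdiff (hA : A.Finite) (hcl : IsConvexGeometry A cl) {x : α}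
    (hx : x ∈ A) : cl (cl {x} \ {x}) = cl {x} \ {x} := by
  have hxA : {x} ⊆ A := Set.singleton_subset_iff.mpr hx
  have hxx : x ∈ cl {x} := hcl.subset_cl hxA rfl
  obtain ⟨e, he, hclosed⟩ :=
    hcl.exists_sdiff_singleton_closed hA (hcl.cl_subset hxA) (hcl.cl_cl hxA) ⟨x, hxx⟩
  obtain rfl : e = x := by
    by_contra hex
    have hsub : cl {x} ⊆ cl {x} \ {e} := hcl.cl_subset_of_subset
      (Set.singleton_subset_iff.mpr ⟨hxx, Ne.symm hex⟩)
      (Set.sdiff_subset.trans (hcl.cl_subset hxA)) hclosed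
    exact (hsub he).2 rfl
  exact hclosed

theorem induction_on_covers (hA : A.Finite) (hcl : IsConvexGeometry A cl) {T : Set α}
    (hTA : T ⊆ A) (hT : cl T = T) {P : Set α → Prop} (top : P T)
    (cover : ∀ C p, C ⊂ T → cl C = C → p ∈ T → p ∉ C → P (insert p C) → P C)
    {C : Set α} (hCT : C ⊆ T) (hC : cl C = C) : P C := by
  induction hn : (T \ C).ncard using Nat.strong_induction_on generalizing C with
  | _ n ih =>
  obtain rfl | hCT' := hCT.eq_or_ssubset
  · exact top
  obtain ⟨p, hpT, hpC, hpc, hpT'⟩ := hcl.exists_insert_closed hA hTA hC hT hCT'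
  refine cover C p hCT' hC hpT hpC (ih _ ?_ hpT' hpc rfl)
  rw [← hn]
  exact Set.ncard_sdiff_insert_lt (hA.subset hTA) hpT hpC

end IsConvexGeometry

section FamilyClosure

variable {α : Type*} {A : Set α} {F : Set α → Prop}

def familyClosure (A : Set α) (F : Set α → Prop) (S : Set α) : Set α :=
  A ∩ ⋂₀ {D | F D ∧ S ⊆ D}

theorem familyClosure_subset (S : Set α) : familyClosure A F S ⊆ A :=
  Set.inter_subset_left

theorem familyClosure_subset_of {S D : Set α} (hD : F D) (hSD : S ⊆ D) :
    familyClosure A F S ⊆ D :=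
  Set.inter_subset_right.trans (Set.sInter_subset_of_mem ⟨hD, hSD⟩)

theorem subset_familyClosure {S : Set α} (hS : S ⊆ A) : S ⊆ familyClosure A F S :=
  Set.subset_inter hS (Set.subset_sInter fun _ hD => hD.2)

theorem familyClosure_eq_self (hsub : ∀ D, F D → D ⊆ A) {D : Set α} (hD : F D) :
    familyClosure A F D = D :=
  (familyClosure_subset_of hD subset_rfl).antisymm (subset_familyClosure (hsub D hD))

theorem inter_sInter_mem (htop : F A) (hinter : ∀ D E, F D → F E → F (D ∩ E))
    {𝔉 : Set (Set α)} (h𝔉 : 𝔉.Finite) (hF : ∀ D ∈ 𝔉, F D) : F (A ∩ ⋂₀ 𝔉) := by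
  induction 𝔉, h𝔉 using Set.Finite.induction_on with
  | empty => simpa using htop
  | @insert D 𝔉 _ _ ih =>
    rw [Set.sInter_insert, Set.inter_left_comm]
    exact hinter _ _ (hF D (Set.mem_insert D 𝔉)) (ih fun E hE => hF E (Set.mem_insert_of_mem D hE))

theorem familyClosure_mem (hA : A.Finite) (hsub : ∀ D, F D → D ⊆ A) (htop : F A)
    (hinter : ∀ D E, F D → F E → F (D ∩ E)) (S : Set α) : F (familyClosure A F S) :=
  inter_sInter_mem htop hinter (hA.finite_subsets.subset fun D hD => hsub D hD.1) fun _ hD => hD.1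

/-- Growing `D` one point at a time inside `F`, the first step that meets `{x, y}` adds only one
of them. -/
theorem exists_mem_xor_of_exists_insert (hA : A.Finite)
    (hgrow : ∀ D, F D → D ≠ A → ∃ p ∈ A, p ∉ D ∧ F (insert p D)) {D : Set α} (hD : F D)
    {x y : α} (hx : x ∈ A \ D) (hy : y ∈ A \ D) (hxy : x ≠ y) :
    ∃ W, F W ∧ D ⊆ W ∧ Xor (x ∈ W) (y ∈ W) := by
  induction hn : (A \ D).ncard using Nat.strong_induction_on generalizing D with
  | _ n ih =>
  obtain ⟨p, hpA, hpD, hpF⟩ := hgrow D hD fun h => hx.2 (h ▸ hx.1)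
  by_cases hpx : p = x
  · subst hpx
    exact ⟨insert p D, hpF, Set.subset_insert p D,
      Or.inl ⟨Set.mem_insert p D, fun h => h.elim (Ne.symm hxy) hy.2⟩⟩
  by_cases hpy : p = y
  · subst hpy
    exact ⟨insert p D, hpF, Set.subset_insert p D,
      Or.inr ⟨Set.mem_insert p D, fun h => h.elim hxy hx.2⟩⟩
  obtain ⟨W, hW, hDW, hxor⟩ := ih _ (hn ▸ Set.ncard_sdiff_insert_lt hA hpA hpD) hpF
    ⟨hx.1, fun h => h.elim (Ne.symm hpx) hx.2⟩ ⟨hy.1, fun h => h.elim (Ne.symm hpy) hy.2⟩ rfl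
  exact ⟨W, hW, (Set.subset_insert p D).trans hDW, hxor⟩

theorem isConvexGeometry_familyClosure (hA : A.Finite) (hsub : ∀ D, F D → D ⊆ A) (htop : F A)
    (hinter : ∀ D E, F D → F E → F (D ∩ E)) (hempty : F ∅)
    (hgrow : ∀ D, F D → D ≠ A → ∃ p ∈ A, p ∉ D ∧ F (insert p D)) :
    IsConvexGeometry A (familyClosure A F) := by
  have hmem := familyClosure_mem hA hsub htop hinter
  refine ⟨fun Y hY => subset_familyClosure hY, fun Y _ => familyClosure_subset Y,
    fun Y Z hYZ hZ => familyClosure_subset_of (hmem Z) (hYZ.trans (subset_familyClosure hZ)),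
    fun Y _ => familyClosure_eq_self hsub (hmem Y), familyClosure_eq_self hsub hempty, ?_⟩
  intro x hx y hy hxy X _ hX hxXy hxX
  have hXF : F X := hX ▸ hmem X
  have hyX : y ∉ X := fun hyX => hxX <| by
    rwa [Set.union_singleton, Set.insert_eq_of_mem hyX, hX] at hxXy
  obtain ⟨W, hW, hXW, ⟨hxW, hyW⟩ | ⟨hyW, hxW⟩⟩ :=
    exists_mem_xor_of_exists_insert hA hgrow hXF ⟨hx, hxX⟩ ⟨hy, hyX⟩ hxy
  · exact fun h => hyW (familyClosure_subset_of hW (Set.union_subset hXW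
      (Set.singleton_subset_iff.mpr hxW)) h)
  · exact absurd (familyClosure_subset_of hW (Set.union_subset hXW
      (Set.singleton_subset_iff.mpr hyW)) hxXy) hxW

end FamilyClosure

section Chainable

variable {α : Type*} {A : Set α} {cl : Set α → Set α}

def JoinClosed (cl : Set α → Set α) (D : Set α) : Prop :=
  ∀ X Y, cl X = X → cl Y = Y → X ⊆ D → Y ⊆ D → cl (X ∪ Y) ⊆ D

theorem JoinClosed.inter {D E : Set α} (hD : JoinClosed cl D) (hE : JoinClosed cl E) :
    JoinClosed cl (D ∩ E) := fun X Y hX hY hXDE hYDE =>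
  Set.subset_inter
    (hD X Y hX hY (hXDE.trans Set.inter_subset_left) (hYDE.trans Set.inter_subset_left))
    (hE X Y hX hY (hXDE.trans Set.inter_subset_right) (hYDE.trans Set.inter_subset_right))

theorem IsConvexGeometry.joinClosed (hcl : IsConvexGeometry A cl) {C : Set α} (hCA : C ⊆ A)
    (hC : cl C = C) : JoinClosed cl C := fun _ _ _ _ hXC hYC =>
  hcl.cl_subset_of_subset (Set.union_subset hXC hYC) hCA hC

inductive IsChainable (A : Set α) (cl : Set α → Set α) : Set α → Prop
  | top : IsChainable A cl A
  | erase {S : Set α} (p : α) :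
      IsChainable A cl S → JoinClosed cl (S \ {p}) → IsChainable A cl (S \ {p})

namespace IsChainable

theorem subset {D : Set α} (h : IsChainable A cl D) : D ⊆ A := by
  induction h with
  | top => exact subset_rfl
  | erase p _ _ ih => exact Set.sdiff_subset.trans ih

theorem joinClosed (hcl : IsConvexGeometry A cl) {D : Set α} (h : IsChainable A cl D) :
    JoinClosed cl D := by
  cases h with
  | top => exact hcl.joinClosed subset_rfl hcl.cl_univ
  | erase _ _ hJ => exact hJ

theorem inter (hcl : IsConvexGeometry A cl) {D E : Set α} (hD : IsChainable A cl D)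
    (hE : IsChainable A cl E) : IsChainable A cl (D ∩ E) := by
  induction hD with
  | top => rwa [Set.inter_eq_self_of_subset_right hE.subset]
  | erase p _ hJ ih =>
    rw [← Set.inter_sdiff_right_comm]
    refine ih.erase p ?_
    rw [Set.inter_sdiff_right_comm]
    exact hJ.inter (hE.joinClosed hcl)

theorem exists_insert {D : Set α} (h : IsChainable A cl D) (hne : D ≠ A) :
    ∃ p ∈ A, p ∉ D ∧ IsChainable A cl (insert p D) := by
  induction h with
  | top => exact absurd rfl hne
  | @erase S p hS _ ih =>
    by_cases hpS : p ∈ S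
    · exact ⟨p, hS.subset hpS, fun h => h.2 rfl, by rwa [Set.insert_sdiff_self_of_mem hpS]⟩
    · rw [Set.sdiff_singleton_eq_self hpS] at hne ⊢
      exact ih hne

theorem of_closed (hA : A.Finite) (hcl : IsConvexGeometry A cl) {C : Set α} (hCA : C ⊆ A)
    (hC : cl C = C) : IsChainable A cl C := by
  refine hcl.induction_on_covers hA subset_rfl hcl.cl_univ top ?_ hCA hC
  intro D p hDA hD _ hpD h
  have := h.erase p
  rw [Set.insert_sdiff_self_of_notMem hpD] at this
  exact this (hcl.joinClosed hDA.subset hD)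

/-- Descend along covers from `cl {x}` to `{x}` while keeping `x`; this is possible because
`cl {x} \ {x}` is closed. -/
theorem singleton (hA : A.Finite) (hcl : IsConvexGeometry A cl) {x : α} (hx : x ∈ A) :
    IsChainable A cl {x} := by
  have hxA : {x} ⊆ A := Set.singleton_subset_iff.mpr hx
  have hW := hcl.cl_cl_singleton_sdiff hA hx
  have hWA : cl {x} \ {x} ⊆ A := Set.sdiff_subset.trans (hcl.cl_subset hxA)
  suffices ∀ F, F ⊆ cl {x} \ {x} → cl F = F → IsChainable A cl (insert x F) by
    simpa using this ∅ (Set.empty_subset _) hcl.cl_empty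
  refine fun F hFW hF => hcl.induction_on_covers (P := fun F => IsChainable A cl (insert x F))
    hA hWA hW ?_ ?_ hFW hF
  · rw [Set.insert_sdiff_self_of_mem (hcl.subset_cl hxA rfl)]
    exact of_closed hA hcl (hcl.cl_subset hxA) (hcl.cl_cl hxA)
  intro F p hFW hF hpW hpF h
  have hpxF : p ∉ insert x F := fun h => h.elim hpW.2 hpF
  have := h.erase p
  rw [Set.insert_comm, Set.insert_sdiff_self_of_notMem hpxF] at this
  refine this fun X Y hX hY hXF hYF => ?_
  -- a closed set inside `insert x F` containing `x` would contain `p`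
  have hclosed_sub : ∀ Z, cl Z = Z → Z ⊆ insert x F → Z ⊆ F := by
    intro Z hZ hZF z hz
    refine (hZF hz).resolve_left fun hzx => hpxF (hZF ?_)
    subst hzx
    exact hcl.cl_subset_of_subset (Set.singleton_subset_iff.mpr hz)
      (hZF.trans (Set.insert_subset hx (hFW.subset.trans hWA))) hZ hpW.1
  exact (hcl.cl_subset_of_subset (Set.union_subset (hclosed_sub X hX hXF) (hclosed_sub Y hY hYF))
    (hFW.subset.trans hWA) hF).trans (Set.subset_insert x F)

end IsChainable

end Chainable

/-- every finite convex geometry `(A, cl)` has a strong atomistic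
extension: a convex geometry `τ` on the same set `A` in which every singleton is
closed, every `cl`-closed set is `τ`-closed, and `cl (X ∪ Y) = τ (X ∪ Y)` for all
`cl`-closed `X, Y`.  In particular, every finite convex geometry is a sub-geometry
of a finite atomistic convex geometry. -/
theorem stmt_14 {α : Type*} (A : Set α) (hA : A.Finite)
    (cl : Set α → Set α) (hcl : IsConvexGeometry A cl) :
    ∃ τ : Set α → Set α,
      IsConvexGeometry A τ ∧
      (∀ a ∈ A, τ {a} = {a}) ∧
      (∀ X : Set α, X ⊆ A → cl X = X → τ X = X) ∧
      (∀ X Y : Set α, X ⊆ A → cl X = X → Y ⊆ A → cl Y = Y →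
        cl (X ∪ Y) = τ (X ∪ Y)) := by
  have hsub : ∀ D, IsChainable A cl D → D ⊆ A := fun _ => IsChainable.subset
  have hinter : ∀ D E, IsChainable A cl D → IsChainable A cl E → IsChainable A cl (D ∩ E) :=
    fun _ _ => IsChainable.inter hcl
  have hclosed : ∀ X, X ⊆ A → cl X = X → IsChainable A cl X :=
    fun _ => IsChainable.of_closed hA hcl
  refine ⟨familyClosure A (IsChainable A cl),
    isConvexGeometry_familyClosure hA hsub .top hinter
      (hclosed ∅ (Set.empty_subset A) hcl.cl_empty) fun _ => IsChainable.exists_insert,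
    fun a ha => familyClosure_eq_self hsub (.singleton hA hcl ha),
    fun X hXA hX => familyClosure_eq_self hsub (hclosed X hXA hX), ?_⟩
  intro X Y hXA hX hYA hY
  have hXYA : X ∪ Y ⊆ A := Set.union_subset hXA hYA
  have hXY := subset_familyClosure (F := IsChainable A cl) hXYA
  refine ((familyClosure_mem hA hsub .top hinter (X ∪ Y)).joinClosed hcl X Y hX hY
    (Set.subset_union_left.trans hXY) (Set.subset_union_right.trans hXY)).antisymm ?_
  exact familyClosure_subset_of (hclosed _ (hcl.cl_subset hXYA) (hcl.cl_cl hXYA))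
    (hcl.subset_cl hXYA)
end

section
/- Let G = {a, b, c, d, x} and let cl be the closure operator whose closed sets are 𝒢 = {∅, {a}, {b}, {d}, {a,b}, {a,d}, {b,d}, {c,d}, {a,b,d}, {a,c,d}, {a,b,x}, {a,d,x}, {b,c,d}, {b,c,d,x}, {a,c,d,x}, {a,b,d,x}, {a,b,c,d,x}}. Let τ be the closure operator on G whose closed sets are all subsets of G except {a, b, c, d} (so τ(Z) = Z for every Z ≠ {a,b,c,d}, and τ({a,b,c,d}) = {a,b,c,d,x}). Then: (1) (G, τ) is an atomistic convex geometry; (2) (G, τ) is a strong extension of (G, cl), i.e., every cl-closed set is τ-closed and cl(X ∪ Y) = τ(X ∪ Y) for all cl-closed X, Y (in particular (G, cl) is a sub-geometry of (G, τ)); (3) x ∈ τ({a,b,c,d}) but x ∉ τ(T) for every proper subset T ⊊ {a,b,c,d} (in particular x ∉ τ({a,b,c}) ∪ τ({a,b,d}) ∪ τ({a,c,d}) ∪ τ({b,c,d})), while x ∈ cl({a,b,c}); so the strong atomistic extension τ does not preserve the Carathéodory-type property of cl. -/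
open Set Function

lemma Set.eq_insert_of_ssubset_of_subset_insert {α : Type*} {S Z : Set α} {x : α}
    (hSZ : S ⊂ Z) (hZ : Z ⊆ insert x S) : Z = insert x S := by
  refine hZ.antisymm (insert_subset ?_ hSZ.subset)
  obtain ⟨z, hzZ, hzS⟩ := exists_of_ssubset hSZ
  obtain rfl : z = x := by simpa [hzS] using hZ hzZ
  exact hzZ

def adjoinAt {α : Type*} (S : Set α) (x : α) (Z : Set α) : Set α :=
  Z ∪ {w | Z = S ∧ w = x}

section AdjoinAt

variable {α : Type*} {S T Z : Set α} {x : α}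

lemma adjoinAt_of_ne (h : Z ≠ S) : adjoinAt S x Z = Z := by
  simp [adjoinAt, h]

@[simp] lemma adjoinAt_self : adjoinAt S x S = insert x S := by
  ext; simp [adjoinAt]

lemma subset_adjoinAt : Z ⊆ adjoinAt S x Z := subset_union_left

lemma ne_of_adjoinAt_eq (hx : x ∉ S) (hZ : adjoinAt S x Z = Z) : Z ≠ S := by
  rintro rfl
  exact insert_ne_self.2 hx (adjoinAt_self ▸ hZ)

lemma notMem_adjoinAt_of_ssubset (hx : x ∉ S) (hT : T ⊂ S) : x ∉ adjoinAt S x T := by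
  rw [adjoinAt_of_ne hT.ne]
  exact fun hxT => hx (hT.subset hxT)

lemma adjoinAt_singleton (hS : S.Nontrivial) (g : α) : adjoinAt S x {g} = {g} :=
  adjoinAt_of_ne fun h => hS.not_subsingleton (h ▸ subsingleton_singleton)

lemma adjoinAt_mono {Y : Set α} (hYZ : Y ⊆ Z) (hZ : Z ⊆ insert x S) :
    adjoinAt S x Y ⊆ adjoinAt S x Z := by
  by_cases hY : Y = S
  · subst hY
    by_cases hZY : Z = Y
    · rw [hZY]
    · rw [adjoinAt_of_ne hZY, adjoinAt_self,
        eq_insert_of_ssubset_of_subset_insert (hYZ.ssubset_of_ne (Ne.symm hZY)) hZ]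
  · exact (adjoinAt_of_ne hY).trans_subset (hYZ.trans subset_adjoinAt)

lemma adjoinAt_anti_exchange (hx : x ∉ S) {u v : α} (huv : u ≠ v) {X : Set α}
    (hX : adjoinAt S x X = X) (hu : u ∈ adjoinAt S x (X ∪ {v})) (huX : u ∉ X) :
    v ∉ adjoinAt S x (X ∪ {u}) := by
  intro hv
  by_cases hXv : X ∪ {v} = S
  · obtain rfl : u = x := by simpa [← hXv, huv, huX] using hu
    rw [adjoinAt_of_ne fun h : X ∪ {u} = S => hx (h ▸ mem_union_right X rfl)] at hv
    have hvX : v ∈ X := by simpa [Ne.symm huv] using hv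
    exact ne_of_adjoinAt_eq hx hX (by rwa [union_singleton, insert_eq_of_mem hvX] at hXv)
  · rw [adjoinAt_of_ne hXv] at hu
    simp_all

theorem isConvexGeometry_adjoinAt (hx : x ∉ S) (hS : S.Nonempty) :
    IsConvexGeometry (insert x S) (adjoinAt S x) := by
  refine ⟨fun _ _ => subset_adjoinAt, ?_, fun _ _ => adjoinAt_mono, ?_,
    adjoinAt_of_ne hS.ne_empty.symm,
    fun _ _ _ _ huv _ _ hX hu huX => adjoinAt_anti_exchange hx huv hX hu huX⟩
  · intro Y hY
    by_cases h : Y = S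
    · simp [h]
    · rwa [adjoinAt_of_ne h]
  · intro Y _
    by_cases hY : Y = S
    · rw [hY, adjoinAt_self, adjoinAt_of_ne (insert_ne_self.2 hx)]
    · rw [adjoinAt_of_ne hY, adjoinAt_of_ne hY]

end AdjoinAt

section ClosureSystem

variable {α : Type*} {𝒢 : Set (Set α)}

lemma sInter_supersets_eq {Z W : Set α} (hW : W ∈ 𝒢) (hZW : Z ⊆ W)
    (h : ∀ V ∈ 𝒢, Z ⊆ V → W ⊆ V) : ⋂₀ {V | V ∈ 𝒢 ∧ Z ⊆ V} = W :=
  (sInter_subset_of_mem (show W ∈ {V | V ∈ 𝒢 ∧ Z ⊆ V} from ⟨hW, hZW⟩)).antisymm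
    (subset_sInter fun V hV => h V hV.1 hV.2)

lemma sInter_supersets_union_eq_adjoinAt {S : Set α} {x : α}
    (hunion : ∀ X ∈ 𝒢, ∀ Y ∈ 𝒢, X ∪ Y ∈ 𝒢 ∨ X ∪ Y = S) (hS : S ∉ 𝒢)
    (hclS : ⋂₀ {V | V ∈ 𝒢 ∧ S ⊆ V} = insert x S) {X Y : Set α} (hX : X ∈ 𝒢) (hY : Y ∈ 𝒢) :
    ⋂₀ {V | V ∈ 𝒢 ∧ X ∪ Y ⊆ V} = adjoinAt S x (X ∪ Y) := by
  rcases hunion X hX Y hY with h | h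
  · rw [sInter_supersets_eq h subset_rfl fun _ _ => id,
      adjoinAt_of_ne (ne_of_mem_of_not_mem h hS)]
  · rw [h, hclS, adjoinAt_self]

end ClosureSystem

section ImageFamily

variable {ι α : Type*} {e : ι → α} {𝒢₀ : Finset (Finset ι)} {s S₀ T₀ U₀ : Finset ι}

def imageFamily (e : ι → α) (𝒢₀ : Finset (Finset ι)) : Set (Set α) :=
  (fun s : Finset ι => e '' ↑s) '' ↑𝒢₀

lemma image_mem_imageFamily_iff (he : Injective e) : e '' ↑s ∈ imageFamily e 𝒢₀ ↔ s ∈ 𝒢₀ :=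
  ((image_injective.2 he).comp Finset.coe_injective).mem_set_image

lemma union_mem_imageFamily_or_eq [DecidableEq ι]
    (h : ∀ s ∈ 𝒢₀, ∀ t ∈ 𝒢₀, s ∪ t ∈ 𝒢₀ ∨ s ∪ t = S₀) :
    ∀ X ∈ imageFamily e 𝒢₀, ∀ Y ∈ imageFamily e 𝒢₀,
      X ∪ Y ∈ imageFamily e 𝒢₀ ∨ X ∪ Y = e '' ↑S₀ := by
  rintro _ ⟨s, hs, rfl⟩ _ ⟨t, ht, rfl⟩
  rw [← image_union, ← Finset.coe_union]
  exact (h s hs t ht).imp (fun h => mem_image_of_mem _ h) (fun h => by rw [h])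

lemma image_subset_of_mem_imageFamily (he : Injective e) (h : ∀ s ∈ 𝒢₀, T₀ ⊆ s → U₀ ⊆ s) :
    ∀ V ∈ imageFamily e 𝒢₀, e '' ↑T₀ ⊆ V → e '' ↑U₀ ⊆ V := by
  rintro _ ⟨s, hs, rfl⟩ hTs
  exact image_mono (Finset.coe_subset.2
    (h s hs (by exact_mod_cast (image_subset_image_iff he).1 hTs)))

end ImageFamily

-- `𝒢` with `a, b, c, d, x` renamed to `0, 1, 2, 3, 4`.
def closedSetsFin5 : Finset (Finset (Fin 5)) :=
  {∅, {0}, {1}, {3}, {0, 1}, {0, 3}, {1, 3}, {2, 3}, {0, 1, 3}, {0, 2, 3}, {0, 1, 4},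
   {0, 3, 4}, {1, 2, 3}, {1, 2, 3, 4}, {0, 2, 3, 4}, {0, 1, 3, 4}, {0, 1, 2, 3, 4}}

lemma closedSetsFin5_union : ∀ s ∈ closedSetsFin5, ∀ t ∈ closedSetsFin5,
    s ∪ t ∈ closedSetsFin5 ∨ s ∪ t = {0, 1, 2, 3} := by
  decide

lemma notMem_closedSetsFin5 : {0, 1, 2, 3} ∉ closedSetsFin5 := by
  decide

lemma top_subset_of_mem_closedSetsFin5 :
    ∀ s ∈ closedSetsFin5, {0, 1, 2, 3} ⊆ s → {0, 1, 2, 3, 4} ⊆ s := by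
  decide

lemma four_mem_of_mem_closedSetsFin5 :
    ∀ s ∈ closedSetsFin5, {0, 1, 2} ⊆ s → {4} ⊆ s := by
  decide

lemma injective_vecCons_five {α : Type*} {a b c d x : α}
    (hab : a ≠ b) (hac : a ≠ c) (had : a ≠ d) (hax : a ≠ x)
    (hbc : b ≠ c) (hbd : b ≠ d) (hbx : b ≠ x)
    (hcd : c ≠ d) (hcx : c ≠ x) (hdx : d ≠ x) : Injective ![a, b, c, d, x] := by
  intro i j h
  fin_cases i <;> fin_cases j <;> simp_all [eq_comm]

/-- the atomistic strong extension `τ` of the five-element convex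
geometry `(G, cl)` (`τ Z = Z` for `Z ≠ {a,b,c,d}` and `τ {a,b,c,d} = {a,b,c,d,x}`):
`(G, τ)` is an atomistic convex geometry and a strong extension of `(G, cl)`, but
`x ∈ τ {a,b,c,d}` while `x ∉ τ T` for every proper `T ⊊ {a,b,c,d}`, although
`x ∈ cl {a,b,c}`; so the strong atomistic extension does not preserve the
Carathéodory-type property of `cl`. -/
theorem stmt_16 {α : Type*} (a b c d x : α)
    (hab : a ≠ b) (hac : a ≠ c) (had : a ≠ d) (hax : a ≠ x)
    (hbc : b ≠ c) (hbd : b ≠ d) (hbx : b ≠ x)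
    (hcd : c ≠ d) (hcx : c ≠ x) (hdx : d ≠ x)
    (𝒢 : Set (Set α))
    (h𝒢 : 𝒢 = {(∅ : Set α), {a}, {b}, {d}, {a, b}, {a, d}, {b, d}, {c, d},
               {a, b, d}, {a, c, d}, {a, b, x}, {a, d, x}, {b, c, d},
               {b, c, d, x}, {a, c, d, x}, {a, b, d, x}, {a, b, c, d, x}})
    (cl : Set α → Set α)
    (hcl : ∀ Z : Set α, cl Z = ⋂₀ {W | W ∈ 𝒢 ∧ Z ⊆ W})
    (τ : Set α → Set α)
    (hτ : ∀ Z : Set α, τ Z = Z ∪ {w | Z = ({a, b, c, d} : Set α) ∧ w = x}) :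
    -- (1) (G, τ) is an atomistic convex geometry
    IsConvexGeometry {a, b, c, d, x} τ ∧
    (∀ g ∈ ({a, b, c, d, x} : Set α), τ {g} = {g}) ∧
    -- (2) (G, τ) is a strong extension of (G, cl)
    (∀ X : Set α, X ∈ 𝒢 → τ X = X) ∧
    (∀ X Y : Set α, X ∈ 𝒢 → Y ∈ 𝒢 → cl (X ∪ Y) = τ (X ∪ Y)) ∧
    -- (3) the Carathéodory-type property fails for τ although it holds for cl
    (x ∈ τ {a, b, c, d}) ∧
    (∀ T : Set α, T ⊂ {a, b, c, d} → x ∉ τ T) ∧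
    (x ∈ cl {a, b, c}) := by
  obtain rfl : cl = fun Z => ⋂₀ {W | W ∈ 𝒢 ∧ Z ⊆ W} := funext hcl
  obtain rfl : τ = adjoinAt {a, b, c, d} x := funext hτ
  set e : Fin 5 → α := ![a, b, c, d, x]
  have he : Injective e := injective_vecCons_five hab hac had hax hbc hbd hbx hcd hcx hdx
  have h𝒢e : 𝒢 = imageFamily e closedSetsFin5 := by
    simp [h𝒢, e, imageFamily, closedSetsFin5, Finset.coe_insert, image_insert_eq]
  have heS : e '' ↑({0, 1, 2, 3} : Finset (Fin 5)) = {a, b, c, d} := by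
    simp [e, Finset.coe_insert, image_insert_eq]
  have heA : e '' ↑({0, 1, 2, 3, 4} : Finset (Fin 5)) = {a, b, c, d, x} := by
    simp [e, Finset.coe_insert, image_insert_eq]
  have hA : ({a, b, c, d, x} : Set α) = insert x {a, b, c, d} := by
    ext; simp only [mem_insert_iff, mem_singleton_iff]; tauto
  have hxS : x ∉ ({a, b, c, d} : Set α) := by
    simp [hax.symm, hbx.symm, hcx.symm, hdx.symm]
  have hS𝒢 : {a, b, c, d} ∉ 𝒢 := by
    rw [h𝒢e, ← heS, image_mem_imageFamily_iff he]
    exact notMem_closedSetsFin5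
  have hclS : ⋂₀ {V | V ∈ 𝒢 ∧ {a, b, c, d} ⊆ V} = insert x {a, b, c, d} := by
    have hA𝒢 : insert x {a, b, c, d} ∈ 𝒢 := by
      rw [h𝒢e, ← hA, ← heA, image_mem_imageFamily_iff he]
      decide
    have := image_subset_of_mem_imageFamily he top_subset_of_mem_closedSetsFin5
    rw [heA, heS, ← h𝒢e, hA] at this
    exact sInter_supersets_eq hA𝒢 (subset_insert x _) this
  have hunion := union_mem_imageFamily_or_eq (e := e) closedSetsFin5_union
  rw [heS, ← h𝒢e] at hunion
  have hx_abc := image_subset_of_mem_imageFamily he four_mem_of_mem_closedSetsFin5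
  simp only [← h𝒢e, e, Finset.coe_insert, Finset.coe_singleton, image_insert_eq,
    image_singleton, singleton_subset_iff] at hx_abc
  exact ⟨hA ▸ isConvexGeometry_adjoinAt hxS ⟨a, by simp⟩,
    fun g _ => adjoinAt_singleton ⟨a, by simp, b, by simp, hab⟩ g,
    fun X hX => adjoinAt_of_ne (ne_of_mem_of_not_mem hX hS𝒢),
    fun X Y hX hY => sInter_supersets_union_eq_adjoinAt hunion hS𝒢 hclS hX hY,
    by simp, fun T hT => notMem_adjoinAt_of_ssubset hxS hT,
    mem_sInter.2 fun V hV => hx_abc V hV.1 hV.2⟩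
end

section
/- Let a₁, a₂, a₃ ∈ ℝ² be affinely independent points, let y ∈ convexHull ℝ {a₁, a₂, a₃}, and let x ∈ ℝ². If x ∈ convexHull ℝ {y, a₁, a₂} and x ∈ convexHull ℝ {y, a₁, a₃}, then x ∈ convexHull ℝ {y, a₁} (i.e., x lies on the segment joining y and a₁). -/
/-!
Write `y = b₁ a₁ + b₂ a₂ + b₃ a₃` and `x = s y + t a₁ + u a₂ = s' y + t' a₁ + u' a₃` with all
weights nonnegative. Expanding both expressions of `x` in the vertices `aᵢ` and comparing
barycentric coordinates gives `u = (s' - s) b₂` and `u' = (s - s') b₃`, so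
`u u' = -(s - s')² b₂ b₃ ≤ 0`. Hence `u = 0` or `u' = 0`, and either way `x ∈ [y, a₁]`.
-/

open Set

variable {𝕜 E : Type*} [AddCommGroup E]

theorem AffineIndependent.eq_zero_of_add_add_eq_zero [Ring 𝕜] [Module 𝕜 E] {a b c : E}
    (h : AffineIndependent 𝕜 ![a, b, c]) {p q r : 𝕜} (hw : p + q + r = 0)
    (hwa : p • a + q • b + r • c = 0) : p = 0 ∧ q = 0 ∧ r = 0 := by
  have := h.eq_zero_of_sum_eq_zero (s := Finset.univ) (w := ![p, q, r])
    (by simpa [Fin.sum_univ_three] using hw) (by simpa [Fin.sum_univ_three] using hwa)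
  exact ⟨this 0 (by simp), this 1 (by simp), this 2 (by simp)⟩

variable [Field 𝕜] [LinearOrder 𝕜] [IsStrictOrderedRing 𝕜] [Module 𝕜 E]

theorem exists_weights_of_mem_convexHull_triple {a b c x : E}
    (hx : x ∈ convexHull 𝕜 {a, b, c}) :
    ∃ p q r : 𝕜, 0 ≤ p ∧ 0 ≤ q ∧ 0 ≤ r ∧ p + q + r = 1 ∧ p • a + q • b + r • c = x := by
  rw [convexHull_insert (insert_nonempty _ _), convexHull_pair, convexJoin_singleton_left,
    mem_iUnion₂] at hx
  obtain ⟨z, ⟨γ, δ, hγ, hδ, hγδ, rfl⟩, α, β, hα, hβ, hαβ, rfl⟩ := hx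
  refine ⟨α, β * γ, β * δ, hα, by positivity, by positivity, ?_, by module⟩
  linear_combination hαβ + β * hγδ

theorem mem_segment_of_mem_convexHull_of_mem_convexHull {a₁ a₂ a₃ y x : E}
    (h : AffineIndependent 𝕜 ![a₁, a₂, a₃]) (hy : y ∈ convexHull 𝕜 {a₁, a₂, a₃})
    (hx₂ : x ∈ convexHull 𝕜 {y, a₁, a₂}) (hx₃ : x ∈ convexHull 𝕜 {y, a₁, a₃}) :
    x ∈ segment 𝕜 y a₁ := by
  obtain ⟨b₁, b₂, b₃, -, hb₂, hb₃, hb, rfl⟩ := exists_weights_of_mem_convexHull_triple hy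
  obtain ⟨s, t, u, hs, ht, hu, hstu, rfl⟩ := exists_weights_of_mem_convexHull_triple hx₂
  obtain ⟨s', t', u', hs', ht', hu', hstu', hx⟩ := exists_weights_of_mem_convexHull_triple hx₃
  obtain ⟨-, hcoord₂, hcoord₃⟩ := h.eq_zero_of_add_add_eq_zero
    (p := s * b₁ + t - (s' * b₁ + t')) (q := s * b₂ + u - s' * b₂)
    (r := s * b₃ - (s' * b₃ + u')) (by linear_combination (s - s') * hb + hstu - hstu')
    (by rw [← sub_eq_zero.2 hx.symm]; module)
  have hprod : u * u' = -((s - s') ^ 2 * (b₂ * b₃)) := by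
    linear_combination u' * hcoord₂ + (s - s') * b₂ * hcoord₃
  have hzero : u = 0 ∨ u' = 0 := mul_eq_zero.1 <| le_antisymm
    (hprod ▸ neg_nonpos.2 (by positivity)) (mul_nonneg hu hu')
  rcases hzero with rfl | rfl
  · exact ⟨s, t, hs, ht, by linarith, by module⟩
  · exact ⟨s', t', hs', ht', by linarith, by rw [← hx]; module⟩

/-- if `a₁, a₂, a₃ ∈ ℝ²` are affinely independent,
`y ∈ convexHull ℝ {a₁, a₂, a₃}`, and `x` belongs to both triangles
`convexHull ℝ {y, a₁, a₂}` and `convexHull ℝ {y, a₁, a₃}`, then `x` lies on the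
segment joining `y` and `a₁`. -/
theorem stmt_17 (a₁ a₂ a₃ : Fin 2 → ℝ)
    (h : AffineIndependent ℝ ![a₁, a₂, a₃])
    (y x : Fin 2 → ℝ)
    (hy : y ∈ convexHull ℝ ({a₁, a₂, a₃} : Set (Fin 2 → ℝ)))
    (hx1 : x ∈ convexHull ℝ ({y, a₁, a₂} : Set (Fin 2 → ℝ)))
    (hx2 : x ∈ convexHull ℝ ({y, a₁, a₃} : Set (Fin 2 → ℝ))) :
    x ∈ convexHull ℝ ({y, a₁} : Set (Fin 2 → ℝ)) := by
  rw [convexHull_pair]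
  exact mem_segment_of_mem_convexHull_of_mem_convexHull h hy hx1 hx2
end
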